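/- arXiv:2411.16716 — 2 statements merged into one kernel-verified Lean document; each statement's English description precedes it below -/
import Mathlib

section
/- Let H be a complex Hilbert space and let D, τ be bounded self-adjoint operators on H with τ² = 1 and Dτ + τD = 0. Set g(x) = x/√(1+x²), h(x) = 1/√(1+x²), and G := g(D) − τ h(D). Then G τ + τ G = −2 h(D), and (G − τ)² = 2(1 + h(D)). Since h(D) ≥ 0, one has (G − τ)² ≥ 2·1, and in particular G − τ is invertible. -/
/-!
The function `h` is even and `g(x) = x h(x)`. Since `τ` anticommutes with `D`, it commutes with
`D²`, hence with `h(D)`, which is a continuous function of `D²`; then it anticommutes with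
`g(D) = D h(D)`. Together with `g² + h² = 1` this is pure algebra: `G = g(D) - τ h(D)` squares
to `1`, `Gτ + τG = -2 h(D)`, and so `(G - τ)² = G² - (Gτ + τG) + τ² = 2 (1 + h(D))`, which is
at least `2` and therefore invertible.
-/

section Symmetry

variable {R : Type*} [Ring R] {τ g h : R}

theorem sub_mul_anticomm_eq_neg_two_mul (hτ : τ * τ = 1) (hgτ : g * τ + τ * g = 0)
    (hhτ : Commute h τ) : (g - τ * h) * τ + τ * (g - τ * h) = -(2 * h) := by
  have hτhτ : τ * h * τ = h := by rw [mul_assoc, hhτ.eq, ← mul_assoc, hτ, one_mul]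
  rw [sub_mul, hτhτ, mul_sub, ← mul_assoc, hτ, one_mul, two_mul]
  linear_combination (norm := abel_nf) hgτ

theorem sub_mul_mul_self_eq_one (hτ : τ * τ = 1) (hgτ : g * τ + τ * g = 0)
    (hhτ : Commute h τ) (hgh : Commute g h) (hpyth : g * g + h * h = 1) :
    (g - τ * h) * (g - τ * h) = 1 := by
  have hτhτh : τ * h * (τ * h) = h * h := by
    rw [← mul_assoc, mul_assoc τ h τ, hhτ.eq, ← mul_assoc, hτ, one_mul]
  have hcross : g * (τ * h) + τ * h * g = 0 := by
    rw [mul_assoc, ← hgh.eq, ← mul_assoc, ← mul_assoc, ← add_mul, hgτ, zero_mul]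
  calc (g - τ * h) * (g - τ * h) = g * g + τ * h * (τ * h) - (g * (τ * h) + τ * h * g) := by
        noncomm_ring
    _ = 1 := by rw [hτhτh, hcross, hpyth, sub_zero]

theorem sub_sq_eq_two_mul_one_add {G : R} (hG : G * G = 1) (hτ : τ * τ = 1)
    (hGτ : G * τ + τ * G = -(2 * h)) : (G - τ) ^ 2 = 2 * (1 + h) := by
  calc (G - τ) ^ 2 = G * G - (G * τ + τ * G) + τ * τ := by noncomm_ring
    _ = 2 * (1 + h) := by rw [hG, hτ, hGτ]; noncomm_ring

end Symmetry

section Anticommute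

variable {A : Type*} [Ring A] [StarRing A] [Algebra ℝ A] [TopologicalSpace A]
  [ContinuousFunctionalCalculus ℝ A IsSelfAdjoint] {a b : A}

theorem commute_cfc_of_even_of_anticomm [IsTopologicalRing A] [T2Space A]
    (hab : a * b + b * a = 0) {f : ℝ → ℝ} (hf : Continuous f) (heven : Function.Even f)
    (ha : IsSelfAdjoint a := by cfc_tac) : Commute (cfc f a) b := by
  have hsq : Commute (a ^ 2) b := by
    rw [commute_iff_eq, pow_two, mul_assoc, eq_neg_of_add_eq_zero_left hab, mul_neg,
      ← mul_assoc, eq_neg_of_add_eq_zero_left hab, neg_mul, neg_neg, mul_assoc]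
  have hf_sqrt : f = fun x => (f ∘ Real.sqrt) (x ^ 2) := by
    funext x
    rw [Function.comp_apply, Real.sqrt_sq_eq_abs]
    rcases abs_choice x with hx | hx <;> rw [hx]
    exact (heven x).symm
  rw [hf_sqrt, cfc_comp_pow (f ∘ Real.sqrt) 2 a (hf.comp Real.continuous_sqrt).continuousOn]
  exact hsq.cfc_real _

theorem cfc_id_mul_anticomm (hab : a * b + b * a = 0) {f : ℝ → ℝ}
    (hfb : Commute (cfc f a) b) (hf : ContinuousOn f (spectrum ℝ a) := by cfc_cont_tac)
    (ha : IsSelfAdjoint a := by cfc_tac) :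
    cfc (fun x => x * f x) a * b + b * cfc (fun x => x * f x) a = 0 := by
  rw [cfc_mul (fun x => x) f a, cfc_id' ℝ a, mul_assoc, hfb.eq, ← mul_assoc, ← mul_assoc,
    ← add_mul, hab, zero_mul]

theorem cfc_mul_self_add_cfc_mul_self {f g : ℝ → ℝ}
    (hfg : ∀ x ∈ spectrum ℝ a, f x ^ 2 + g x ^ 2 = 1)
    (hf : ContinuousOn f (spectrum ℝ a) := by cfc_cont_tac)
    (hg : ContinuousOn g (spectrum ℝ a) := by cfc_cont_tac)
    (ha : IsSelfAdjoint a := by cfc_tac) :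
    cfc f a * cfc f a + cfc g a * cfc g a = 1 := by
  rw [← cfc_mul f f a, ← cfc_mul g g a, ← cfc_add .., ← cfc_one ℝ a]
  exact cfc_congr fun x hx => by simpa [sq] using hfg x hx

end Anticommute

theorem mul_one_div_sqrt_sq_add_one_div_sqrt_sq (x : ℝ) :
    (x * (1 / Real.sqrt (1 + x ^ 2))) ^ 2 + (1 / Real.sqrt (1 + x ^ 2)) ^ 2 = 1 := by
  have hs : Real.sqrt (1 + x ^ 2) ^ 2 = 1 + x ^ 2 := Real.sq_sqrt (by positivity)
  field_simp
  linarith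

open ContinuousLinearMap in
theorem stmt_5_general {H : Type*} [NormedAddCommGroup H] [InnerProductSpace ℂ H] [CompleteSpace H]
    (D τ : H →L[ℂ] H) (hD : IsSelfAdjoint D)
    (hτ2 : τ * τ = 1) (hanti : D * τ + τ * D = 0)
    (G : H →L[ℂ] H)
    (hG : G = cfc (fun x : ℝ => x / Real.sqrt (1 + x ^ 2)) D -
      τ * cfc (fun x : ℝ => 1 / Real.sqrt (1 + x ^ 2)) D) :
    G * τ + τ * G = -((2 : ℂ) • cfc (fun x : ℝ => 1 / Real.sqrt (1 + x ^ 2)) D) ∧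
      (G - τ) ^ 2 = (2 : ℂ) • (1 + cfc (fun x : ℝ => 1 / Real.sqrt (1 + x ^ 2)) D) ∧
      (cfc (fun x : ℝ => 1 / Real.sqrt (1 + x ^ 2)) D).IsPositive ∧
      ((G - τ) ^ 2 - (2 : ℂ) • 1).IsPositive ∧
      IsUnit (G - τ) := by
  set h : ℝ → ℝ := fun x => 1 / Real.sqrt (1 + x ^ 2)
  have hh_cont : Continuous h := by fun_prop (disch := intro x; positivity)
  have hhτ : Commute (cfc h D) τ :=
    commute_cfc_of_even_of_anticomm hanti hh_cont fun x => by simp only [h, neg_sq]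
  have hgτ := cfc_id_mul_anticomm hanti hhτ
  have hpyth := cfc_mul_self_add_cfc_mul_self (a := D) (f := fun x => x * h x) (g := h)
    fun x _ => mul_one_div_sqrt_sq_add_one_div_sqrt_sq x
  rw [show (fun x : ℝ => x / Real.sqrt (1 + x ^ 2)) = fun x => x * h x from
    funext fun x => (mul_one_div x _).symm] at hG
  have hGτ : G * τ + τ * G = -(2 * cfc h D) := hG ▸ sub_mul_anticomm_eq_neg_two_mul hτ2 hgτ hhτ
  have hGG : G * G = 1 := hG ▸ sub_mul_mul_self_eq_one hτ2 hgτ hhτ (cfc_commute_cfc _ _ D) hpyth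
  have hsq := sub_sq_eq_two_mul_one_add hGG hτ2 hGτ
  have hh_nonneg : 0 ≤ cfc h D := cfc_nonneg fun x _ => by positivity
  have h_one_add : IsStrictlyPositive (1 + cfc h D) := isStrictlyPositive_one.add_nonneg hh_nonneg
  refine ⟨by rw [hGτ, two_smul, two_mul], by rw [hsq, two_smul, two_mul],
    (nonneg_iff_isPositive _).1 hh_nonneg, ?_, ?_⟩
  · rw [← nonneg_iff_isPositive, hsq, two_smul, two_mul, add_add_add_comm, add_sub_cancel_left]
    exact add_nonneg hh_nonneg hh_nonneg
  · rw [← isUnit_pow_iff two_ne_zero, hsq, two_mul]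
    exact (h_one_add.add_nonneg h_one_add.nonneg).isUnit

/-- For a symmetry `τ` anticommuting with the self-adjoint `D` and
`G = g(D) - τ h(D)` (with `g(x) = x/√(1+x²)`, `h(x) = 1/√(1+x²)`), one has
`Gτ + τG = -2 h(D)` and `(G - τ)² = 2(1 + h(D))`; since `h(D) ≥ 0` this gives
`(G - τ)² ≥ 2·1`, and in particular `G - τ` is invertible. -/
theorem stmt_5 {H : Type*} [NormedAddCommGroup H] [InnerProductSpace ℂ H] [CompleteSpace H]
    (D τ : H →L[ℂ] H) (hD : IsSelfAdjoint D) (hτ : IsSelfAdjoint τ)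
    (hτ2 : τ * τ = 1) (hanti : D * τ + τ * D = 0)
    (G : H →L[ℂ] H)
    (hG : G = cfc (fun x : ℝ => x / Real.sqrt (1 + x ^ 2)) D -
      τ * cfc (fun x : ℝ => 1 / Real.sqrt (1 + x ^ 2)) D) :
    G * τ + τ * G = -((2 : ℂ) • cfc (fun x : ℝ => 1 / Real.sqrt (1 + x ^ 2)) D) ∧
      (G - τ) ^ 2 = (2 : ℂ) • (1 + cfc (fun x : ℝ => 1 / Real.sqrt (1 + x ^ 2)) D) ∧
      (cfc (fun x : ℝ => 1 / Real.sqrt (1 + x ^ 2)) D).IsPositive ∧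
      ((G - τ) ^ 2 - (2 : ℂ) • 1).IsPositive ∧
      IsUnit (G - τ) :=
  stmt_5_general D τ hD hτ2 hanti G hG
end

section
/- Let H be a complex Hilbert space and let D, τ be bounded self-adjoint operators on H with τ² = 1 and Dτ + τD = 0. Set g(x) = x/√(1+x²), h(x) = 1/√(1+x²), and G := g(D) − τ h(D). Then τG is a unitary operator satisfying τ (τG) τ = (τG)*, the operator 1 − τG is invertible, and 1 does not belong to the spectrum of τG. -/
/-!
Write `g = g(D)` and `h = h(D)`. Conjugation by the symmetry `τ` is a ⋆-automorphism sending `D`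
to `-D`, so it commutes with the functional calculus: the odd `g(D)` anticommutes and the even
`h(D)` commutes with `τ`. Hence `τG = τg - h` with `(τG)* = gτ - h = τ(τG)τ`, and `g² + h² = 1`
makes `τG` unitary. Finally `(1 - τG)*(1 - τG) = 2(1 + h)` is invertible because `h ≥ 0`, and
`1 - τG` is normal, so it is invertible itself.
-/

section Symmetry

variable {A : Type*} [Ring A] {τ g h u v : A}

lemma mul_symmetry_eq_symmetry_mul (hτ2 : τ * τ = 1) (huv : τ * u * τ = v) : u * τ = τ * v := by
  calc u * τ = (τ * τ) * u * τ := by rw [hτ2, one_mul]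
    _ = τ * v := by rw [← huv]; noncomm_ring

lemma mul_eq_one_of_symmetry_conj (hτ2 : τ * τ = 1) (huv : τ * u * τ = v) (hvu : v * u = 1) :
    u * v = 1 := by
  have hvu' : τ * v * τ = u := by
    rw [← huv]
    calc τ * (τ * u * τ) * τ = (τ * τ) * u * (τ * τ) := by noncomm_ring
      _ = u := by rw [hτ2, one_mul, mul_one]
  calc u * v = (τ * v * τ) * (τ * u * τ) := by rw [hvu', huv]
    _ = τ * v * (τ * τ) * u * τ := by noncomm_ring
    _ = 1 := by rw [hτ2, mul_one, mul_assoc τ v u, hvu, mul_one, hτ2]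

lemma symmetry_mul_sub_conj (hτ2 : τ * τ = 1) (hhτ : h * τ = τ * h) :
    τ * (τ * g - h) * τ = g * τ - h := by
  calc τ * (τ * g - h) * τ = (τ * τ) * g * τ - τ * (h * τ) := by noncomm_ring
    _ = g * τ - h := by rw [hhτ, ← mul_assoc, hτ2, one_mul, one_mul]

lemma mul_symmetry_sub_mul_symmetry_mul_sub (hτ2 : τ * τ = 1) (hgτ : g * τ = -(τ * g))
    (hhτ : h * τ = τ * h) (hgh : Commute g h) (hsq : g * g + h * h = 1) :
    (g * τ - h) * (τ * g - h) = 1 := by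
  have hτg : τ * g = -(g * τ) := by rw [hgτ, neg_neg]
  calc (g * τ - h) * (τ * g - h) = g * (τ * τ) * g - (g * (τ * h) + h * (τ * g)) + h * h := by
        noncomm_ring
    _ = g * g + h * h - (g * h - h * g) * τ := by rw [hτ2, ← hhτ, hτg]; noncomm_ring
    _ = 1 := by rw [hgh.eq, sub_self, zero_mul, sub_zero, hsq]

variable [StarRing A]

lemma star_symmetry_mul_sub (hτ : IsSelfAdjoint τ) (hg : IsSelfAdjoint g) (hh : IsSelfAdjoint h) :
    star (τ * g - h) = g * τ - h := by
  rw [star_sub, star_mul, hτ.star_eq, hg.star_eq, hh.star_eq]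

lemma symmetry_mul_sub_mem_unitary (hτ : IsSelfAdjoint τ) (hτ2 : τ * τ = 1)
    (hg : IsSelfAdjoint g) (hh : IsSelfAdjoint h) (hgτ : g * τ = -(τ * g))
    (hhτ : h * τ = τ * h) (hgh : Commute g h) (hsq : g * g + h * h = 1) :
    τ * g - h ∈ unitary A := by
  rw [Unitary.mem_iff, star_symmetry_mul_sub hτ hg hh]
  have hleft := mul_symmetry_sub_mul_symmetry_mul_sub hτ2 hgτ hhτ hgh hsq
  exact ⟨hleft, mul_eq_one_of_symmetry_conj hτ2 (symmetry_mul_sub_conj hτ2 hhτ) hleft⟩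

lemma star_one_sub_mul_one_sub_symmetry_mul_sub (hτ : IsSelfAdjoint τ) (hτ2 : τ * τ = 1)
    (hg : IsSelfAdjoint g) (hh : IsSelfAdjoint h) (hgτ : g * τ = -(τ * g))
    (hhτ : h * τ = τ * h) (hgh : Commute g h) (hsq : g * g + h * h = 1) :
    star (1 - (τ * g - h)) * (1 - (τ * g - h)) = 2 * (1 + h) := by
  rw [star_sub, star_one, star_symmetry_mul_sub hτ hg hh]
  calc (1 - (g * τ - h)) * (1 - (τ * g - h))
      = 1 + (g * τ - h) * (τ * g - h) + (h + h) - (g * τ + τ * g) := by noncomm_ring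
    _ = 2 * (1 + h) := by
      rw [mul_symmetry_sub_mul_symmetry_mul_sub hτ2 hgτ hhτ hgh hsq, hgτ, neg_add_cancel]
      noncomm_ring

end Symmetry

lemma IsStarNormal.isUnit_of_isUnit_star_mul_self {A : Type*} [Monoid A] [StarMul A] {a : A}
    [IsStarNormal a] (h : IsUnit (star a * a)) : IsUnit a :=
  (IsStarNormal.star_comm_self.isUnit_mul_iff.1 h).2

lemma cfc_mul_symmetry_of_conj_eq_neg {A : Type*} [CStarAlgebra A] {τ a : A}
    (hτ : IsSelfAdjoint τ) (hτ2 : τ * τ = 1)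
    (ha : IsSelfAdjoint a) (hτa : τ * a * τ = -a) (f : ℝ → ℝ) (hf : Continuous f) :
    cfc f a * τ = τ * cfc (fun x => f (-x)) a := by
  have hτu : τ ∈ unitary A := Unitary.mem_iff.2 ⟨by rw [hτ.star_eq, hτ2], by rw [hτ.star_eq, hτ2]⟩
  let φ := Unitary.conjStarAlgAut ℝ A ⟨τ, hτu⟩
  have hφ : ∀ x, φ x = τ * x * τ := fun x => by simp [φ, hτ.star_eq]
  have hφc : Continuous φ := by
    simp only [funext hφ]; fun_prop
  refine mul_symmetry_eq_symmetry_mul hτ2 ?_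
  rw [← hφ, StarAlgHomClass.map_cfc φ f a hf.continuousOn hφc ha (by rw [hφ, hτa]; exact ha.neg),
    hφ, hτa, cfc_comp_neg f a hf.continuousOn ha]

lemma div_sqrt_one_add_sq_mul_self_add_one_div_mul_self (x : ℝ) :
    x / √(1 + x ^ 2) * (x / √(1 + x ^ 2)) + 1 / √(1 + x ^ 2) * (1 / √(1 + x ^ 2)) = 1 := by
  have hpos : (0 : ℝ) < 1 + x ^ 2 := by positivity
  rw [div_mul_div_comm, div_mul_div_comm, ← add_div, Real.mul_self_sqrt hpos.le,
    div_eq_one_iff_eq hpos.ne']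
  ring

/-- For a symmetry `τ` anticommuting with the self-adjoint `D` and
`G = g(D) - τ h(D)` (with `g(x) = x/√(1+x²)`, `h(x) = 1/√(1+x²)`): the operator `τG` is
unitary with `τ (τG) τ = (τG)*`, the operator `1 - τG` is invertible, and `1` is not in
the spectrum of `τG`. -/
theorem stmt_6 {H : Type*} [NormedAddCommGroup H] [InnerProductSpace ℂ H] [CompleteSpace H]
    (D τ : H →L[ℂ] H) (hD : IsSelfAdjoint D) (hτ : IsSelfAdjoint τ)
    (hτ2 : τ * τ = 1) (hanti : D * τ + τ * D = 0)
    (G : H →L[ℂ] H)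
    (hG : G = cfc (fun x : ℝ => x / Real.sqrt (1 + x ^ 2)) D -
      τ * cfc (fun x : ℝ => 1 / Real.sqrt (1 + x ^ 2)) D) :
    τ * G ∈ unitary (H →L[ℂ] H) ∧ τ * (τ * G) * τ = star (τ * G) ∧
      IsUnit (1 - τ * G) ∧ (1 : ℂ) ∉ spectrum ℂ (τ * G) := by
  have hsqrt (x : ℝ) : √(1 + x ^ 2) ≠ 0 := by positivity
  have hgc : Continuous fun x : ℝ => x / √(1 + x ^ 2) := by fun_prop (disch := exact hsqrt)
  have hhc : Continuous fun x : ℝ => 1 / √(1 + x ^ 2) := by fun_prop (disch := exact hsqrt)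
  set g := cfc (fun x : ℝ => x / √(1 + x ^ 2)) D
  set h := cfc (fun x : ℝ => 1 / √(1 + x ^ 2)) D
  have hτD : τ * D * τ = -D := by
    rw [mul_assoc, eq_neg_of_add_eq_zero_left hanti, mul_neg, ← mul_assoc, hτ2, one_mul]
  have hgτ : g * τ = -(τ * g) := by
    rw [cfc_mul_symmetry_of_conj_eq_neg hτ hτ2 hD hτD _ hgc, ← mul_neg, ← cfc_neg]
    simp only [neg_div, neg_sq]
  have hhτ : h * τ = τ * h := by
    simp only [h, cfc_mul_symmetry_of_conj_eq_neg hτ hτ2 hD hτD _ hhc, neg_sq]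
  have hsq : g * g + h * h = 1 := by
    rw [← cfc_mul .., ← cfc_mul .., ← cfc_add .., ← cfc_const_one ℝ D]
    exact cfc_congr fun x _ => div_sqrt_one_add_sq_mul_self_add_one_div_mul_self x
  have hU : τ * G = τ * g - h := by rw [hG, mul_sub, ← mul_assoc, hτ2, one_mul]
  have hg : IsSelfAdjoint g := cfc_predicate _ D
  have hh : IsSelfAdjoint h := cfc_predicate _ D
  have hgh : Commute g h := cfc_commute_cfc _ _ D
  have hunitary : τ * G ∈ unitary (H →L[ℂ] H) :=
    hU ▸ symmetry_mul_sub_mem_unitary hτ hτ2 hg hh hgτ hhτ hgh hsq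
  have hinv : IsUnit (1 - τ * G) := by
    have := isStarNormal_of_mem_unitary hunitary
    refine IsStarNormal.isUnit_of_isUnit_star_mul_self ?_
    rw [hU, star_one_sub_mul_one_sub_symmetry_mul_sub hτ hτ2 hg hh hgτ hhτ hgh hsq]
    have h2 : IsUnit (2 : H →L[ℂ] H) := by
      simpa only [map_ofNat] using (isUnit_of_invertible (2 : ℂ)).map (algebraMap ℂ (H →L[ℂ] H))
    have hh0 : 0 ≤ h := cfc_nonneg fun x _ => by positivity
    exact h2.mul (CStarAlgebra.isUnit_of_le 1 (le_add_of_nonneg_right hh0))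
  refine ⟨hunitary, ?_, hinv, ?_⟩
  · rw [hU, star_symmetry_mul_sub hτ hg hh, symmetry_mul_sub_conj hτ2 hhτ]
  · rwa [spectrum.notMem_iff, map_one]
end
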